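/- arXiv:1906.04697 — 3 statements merged into one kernel-verified Lean document; each statement's English description precedes it below -/
import Mathlib

section
/- There exists a universal constant c > 0 such that for any δ ∈ (0,1), any number of epochs M ≥ 1, and any N ≥ log(8MD/δ)/(1−γ)², the noise matrix V† = T̃_N(θ*) − T(θ*) satisfies ‖V†‖_∞ ≤ c·(‖σ(θ*)‖_∞ + (1−γ)·‖θ*‖_∞)·√(log(8MD/δ)/N) with probability at least 1 − δ/(3M). -/
open MeasureTheory ProbabilityTheory Finset

namespace VRQ

variable {S A : Type} [Fintype S] [Fintype A] [Nonempty S] [Nonempty A]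

/-- A finite Markov decision process: transition probabilities and rewards. -/
structure MDP (S A : Type) [Fintype S] [Fintype A] where
  P : S → A → S → ℝ
  P_nonneg : ∀ s a s', 0 ≤ P s a s'
  P_sum_one : ∀ s a, ∑ s', P s a s' = 1
  r : S → A → ℝ

/-- `vmax θ s = max_{a} θ s a`. -/
noncomputable def vmax (θ : S → A → ℝ) (s : S) : ℝ :=
  (Finset.univ : Finset A).sup' Finset.univ_nonempty (θ s)

/-- Sup-norm over state-action pairs. -/
noncomputable def supNorm (θ : S → A → ℝ) : ℝ :=
  (Finset.univ : Finset (S × A)).sup' Finset.univ_nonempty fun p => |θ p.1 p.2|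

/-- The population Bellman operator. -/
noncomputable def bellman (M : MDP S A) (γ : ℝ) (θ : S → A → ℝ) : S → A → ℝ :=
  fun s a => M.r s a + γ * ∑ s', M.P s a s' * vmax θ s'

/-- The empirical Bellman operator built from the sample `X`. -/
noncomputable def empBellman (M : MDP S A) (γ : ℝ) (X : S → A → S) (θ : S → A → ℝ) :
    S → A → ℝ :=
  fun s a => M.r s a + γ * vmax θ (X s a)

/-- The entrywise standard deviation `σ(θ)(s,a)` of the empirical Bellman operator at `θ`. -/
noncomputable def bellStd (M : MDP S A) (γ : ℝ) (θ : S → A → ℝ) : S → A → ℝ :=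
  fun s a => Real.sqrt (γ ^ 2 *
    (∑ s', M.P s a s' * (vmax θ s') ^ 2 - (∑ s', M.P s a s' * vmax θ s') ^ 2))

/-- Monte Carlo approximation `T̃_N` of the Bellman operator from `N` samples. -/
noncomputable def mcBellman (M : MDP S A) (γ : ℝ) (N : ℕ) (Y : ℕ → S → A → S)
    (θ : S → A → ℝ) : S → A → ℝ :=
  fun s a => (N : ℝ)⁻¹ * ∑ i ∈ Finset.range N, empBellman M γ (Y i) θ s a

/-- Stepsize `λ_k = 1/(1+(1-γ)k)`. -/
noncomputable def stepSize (γ : ℝ) (k : ℕ) : ℝ := 1 / (1 + (1 - γ) * k)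

/-- Variance-reduced `Q`-learning iterates within one epoch: `vrIter ... t = θ_{t+1}`,
with `θ₁ = θbar` and `θ_{t+1} = (1-λ_t) θ_t + λ_t (T̂_t(θ_t) - T̂_t(θbar) + rec)`. -/
noncomputable def vrIter (M : MDP S A) (γ : ℝ) (θbar rec : S → A → ℝ)
    (X : ℕ → S → A → S) : ℕ → S → A → ℝ
  | 0 => θbar
  | t + 1 => fun s a =>
      (1 - stepSize γ (t + 1)) * vrIter M γ θbar rec X t s a +
        stepSize γ (t + 1) *
          (empBellman M γ (X (t + 1)) (vrIter M γ θbar rec X t) s a -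
            empBellman M γ (X (t + 1)) θbar s a + rec s a)

/-- One epoch of variance-reduced `Q`-learning. -/
noncomputable def runEpoch (M : MDP S A) (γ : ℝ) (K N : ℕ)
    (X Y : ℕ → S → A → S) (θbar : S → A → ℝ) : S → A → ℝ :=
  vrIter M γ θbar (mcBellman M γ N Y θbar) X K

/-- The full variance-reduced `Q`-learning algorithm: `vrQLearn ... m = θ̄_m`. -/
noncomputable def vrQLearn (M : MDP S A) (γ : ℝ) (K : ℕ) (Nm : ℕ → ℕ)
    (X Y : ℕ → ℕ → S → A → S) (θ0 : S → A → ℝ) : ℕ → S → A → ℝ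
  | 0 => θ0
  | m + 1 => runEpoch M γ K (Nm (m + 1)) (X (m + 1)) (Y (m + 1))
      (vrQLearn M γ K Nm X Y θ0 m)

/-- Auxiliary noise process: `path₁ = 0`, `path_{t+1} = (1-λ_t) path_t + λ_t W_t`. -/
noncomputable def auxPath (γ : ℝ) (W : ℕ → S → A → ℝ) : ℕ → S → A → ℝ
  | 0 => fun _ _ => 0
  | t + 1 =>
      if t = 0 then fun _ _ => 0
      else fun s a => (1 - stepSize γ t) * auxPath γ W t s a + stepSize γ t * W t s a

/-- `X : Ω → S → A → S` is a generative-model sample: each coordinate `X ω s a`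
is distributed according to `P(· | s,a)`. -/
def IsSample {Ω : Type} [MeasurableSpace Ω] [MeasurableSpace S] (μ : Measure Ω)
    (M : MDP S A) (X : Ω → S → A → S) : Prop :=
  (∀ s a, Measurable fun ω => X ω s a) ∧
    ∀ s a s', μ {ω | X ω s a = s'} = ENNReal.ofReal (M.P s a s')

/-- Policy transition operator `P^π`. -/
noncomputable def polOp (M : MDP S A) (π : S → A) (u : S → A → ℝ) : S → A → ℝ :=
  fun s a => ∑ s', M.P s a s' * u s' (π s')

/-- The resolvent `(I - γ P^π)⁻¹ = Σ_{k≥0} γ^k (P^π)^k`. -/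
noncomputable def resolvent (M : MDP S A) (γ : ℝ) (π : S → A) (u : S → A → ℝ) :
    S → A → ℝ :=
  fun s a => ∑' k : ℕ, γ ^ k * (polOp M π)^[k] u s a

end VRQ

/-!
Entry `(s,a)` of `T̃_N(θ*) - T(θ*)` is the mean of `N` independent copies of
`γ (max θ*(X,·) - E max θ*(X,·))` with `X ∼ P(·|s,a)`: centred, bounded by `2γ‖θ*‖`, and with
variance `σ(θ*)(s,a)²`. Bernstein's inequality (the Chernoff bound with `eˣ ≤ 1 + x + 3x²/4` for
`|x| ≤ 1`) keeps the entry below `(σ √(3NL) + 4γ‖θ*‖ L) / N` outside probability `2e^{-L}`, and the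
sample size `L ≤ (1-γ)² N` turns the range term into at most `4(1-γ)‖θ*‖ √(L/N)`. A union bound over
the `D` entries with `L = log(8MD/δ)` leaves probability `δ/(4M) ≤ δ/(3M)`, with `c = 4`.
-/

open Real

lemma exp_le_quadratic_of_abs_le_one {x : ℝ} (hx : |x| ≤ 1) : exp x ≤ 1 + x + 3 / 4 * x ^ 2 := by
  have h := (abs_le.1 (Real.exp_bound hx (n := 2) two_pos)).2
  simp only [sum_range_succ, sum_range_zero] at h
  norm_num [sq_abs] at h
  linarith

lemma exists_chernoff_exponent_le {q b L u : ℝ} (hb : 0 < b) (hL : 0 ≤ L)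
    (hu : √(3 * q * L) + 2 * b * L ≤ u) :
    ∃ t, 0 ≤ t ∧ t * b ≤ 1 ∧ -t * u + 3 / 4 * t ^ 2 * q ≤ -L := by
  have hbL : 0 ≤ 2 * b * L := by positivity
  have hbu : 2 * b * L ≤ u := by linarith [sqrt_nonneg (3 * q * L)]
  have hu0 : 0 ≤ u := hbL.trans hbu
  -- `t = 1/b` when the constraint `t b ≤ 1` binds, else the unconstrained minimiser `2u/(3q)`
  by_cases hqu : 3 * q ≤ 2 * u * b
  · refine ⟨1 / b, by positivity, by field_simp; rfl, ?_⟩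
    field_simp
    nlinarith
  · have hq : 0 < q := by nlinarith [mul_nonneg hu0 hb.le]
    have hu2 : 3 * q * L ≤ u ^ 2 := (sqrt_le_left hu0).1 (by linarith)
    refine ⟨2 * u / (3 * q), div_nonneg (by linarith) (by positivity), ?_, ?_⟩
    · rw [div_mul_eq_mul_div, div_le_one (by positivity)]
      linarith
    · field_simp
      nlinarith

lemma bernstein_threshold_le {σ τ Θ γ L N : ℝ} (hσ : 0 ≤ σ) (hστ : σ ≤ τ) (hΘ : 0 ≤ Θ)
    (hγ1 : γ ≤ 1) (hL : 0 ≤ L) (hN : 0 < N) (hLN : L ≤ (1 - γ) ^ 2 * N) :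
    σ * √(3 * N * L) + 2 * (2 * γ * Θ) * L ≤ N * (4 * (τ + (1 - γ) * Θ) * √(L / N)) := by
  have hNL : N * √(L / N) = √(N * L) := by
    rw [show N * L = N ^ 2 * (L / N) by field_simp, sqrt_mul (sq_nonneg N), sqrt_sq hN.le]
  have h3 : √(3 * N * L) ≤ 2 * √(N * L) := by
    rw [mul_assoc, sqrt_mul (by norm_num)]
    gcongr
    exact sqrt_le_iff.2 ⟨by norm_num, by norm_num⟩
  have hLsqrt : L ≤ (1 - γ) * √(N * L) := by
    rw [← sqrt_sq (by linarith : 0 ≤ 1 - γ), ← sqrt_mul (sq_nonneg _), le_sqrt hL (by positivity)]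
    nlinarith
  have hsqrt : 0 ≤ √(N * L) := sqrt_nonneg _
  calc σ * √(3 * N * L) + 2 * (2 * γ * Θ) * L
      ≤ τ * (2 * √(N * L)) + 4 * Θ * ((1 - γ) * √(N * L)) := by
        refine add_le_add (mul_le_mul hστ h3 (sqrt_nonneg _) (hσ.trans hστ)) ?_
        nlinarith [mul_nonneg (mul_nonneg hΘ hL) (sub_nonneg.2 hγ1),
          mul_le_mul_of_nonneg_left hLsqrt hΘ]
    _ ≤ N * (4 * (τ + (1 - γ) * Θ) * √(L / N)) := by
        rw [show N * (4 * (τ + (1 - γ) * Θ) * √(L / N)) = 4 * (τ + (1 - γ) * Θ) * (N * √(L / N))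
          by ring, hNL]
        nlinarith [mul_nonneg (hσ.trans hστ) hsqrt]

lemma sum_mul_sub_sq_eq {E : Type*} [Fintype E] (p g : E → ℝ) (hp : ∑ e, p e = 1) :
    ∑ e, p e * (g e - ∑ e', p e' * g e') ^ 2 = ∑ e, p e * g e ^ 2 - (∑ e, p e * g e) ^ 2 := by
  set m := ∑ e, p e * g e
  have hexpand : ∀ e, p e * (g e - m) ^ 2 = p e * g e ^ 2 - 2 * m * (p e * g e) + m ^ 2 * p e :=
    fun e => by ring
  simp_rw [hexpand, sum_add_distrib, sum_sub_distrib, ← mul_sum, hp]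
  ring

lemma abs_sum_mul_le {E : Type*} [Fintype E] {p g : E → ℝ} (hp0 : ∀ e, 0 ≤ p e)
    (hp : ∑ e, p e = 1) {C : ℝ} (hg : ∀ e, |g e| ≤ C) : |∑ e, p e * g e| ≤ C :=
  calc |∑ e, p e * g e| ≤ ∑ e, p e * |g e| := by
        refine (abs_sum_le_sum_abs _ _).trans_eq (sum_congr rfl fun e _ => ?_)
        rw [abs_mul, abs_of_nonneg (hp0 e)]
    _ ≤ ∑ e, p e * C := by gcongr with e; exacts [hp0 e, hg e]
    _ = C := by rw [← sum_mul, hp, one_mul]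

section

variable {Ω ι : Type*} [MeasurableSpace Ω] {μ : Measure Ω}

lemma integral_comp_eq_sum_measureReal [IsFiniteMeasure μ] {E : Type*} [MeasurableSpace E]
    [Fintype E] [MeasurableSingletonClass E] {X : Ω → E} (hX : Measurable X) (g : E → ℝ) :
    ∫ ω, g (X ω) ∂μ = ∑ e, μ.real (X ⁻¹' {e}) * g e := by
  rw [← integral_map hX.aemeasurable Integrable.of_finite.aestronglyMeasurable,
    integral_fintype Integrable.of_finite]
  simp [map_measureReal_apply hX (measurableSet_singleton _)]

lemma integrable_exp_mul_of_abs_le [IsFiniteMeasure μ] {X : Ω → ℝ} (hX : Measurable X) {b : ℝ}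
    (hb : ∀ ω, |X ω| ≤ b) (t : ℝ) : Integrable (fun ω => exp (t * X ω)) μ := by
  refine Integrable.of_bound (by fun_prop) (exp (|t| * b)) (ae_of_all _ fun ω => ?_)
  rw [norm_eq_abs, abs_exp, exp_le_exp]
  calc t * X ω ≤ |t| * |X ω| := (le_abs_self _).trans (abs_mul _ _).le
    _ ≤ |t| * b := by gcongr; exact hb ω

variable [IsProbabilityMeasure μ]

lemma ofReal_one_sub_le_measure {s : Set Ω} {ε : ℝ} (h : μ.real sᶜ ≤ ε) :
    ENNReal.ofReal (1 - ε) ≤ μ s := by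
  rw [ENNReal.ofReal_le_iff_le_toReal (measure_ne_top μ s), ← measureReal_def]
  have := measureReal_union_le (μ := μ) s sᶜ
  rw [Set.union_compl_self, probReal_univ] at this
  linarith

lemma mgf_le_exp_of_abs_le {X : Ω → ℝ} (hX : Measurable X) {b t : ℝ}
    (hb : ∀ ω, |X ω| ≤ b) (hmean : μ[X] = 0) (ht : 0 ≤ t) (htb : t * b ≤ 1) :
    mgf X μ t ≤ exp (3 / 4 * t ^ 2 * ∫ ω, X ω ^ 2 ∂μ) := by
  have hX_int : Integrable X μ :=
    Integrable.of_bound hX.aestronglyMeasurable b (ae_of_all _ fun ω => hb ω)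
  have hX2_int : Integrable (fun ω => X ω ^ 2) μ := by
    refine Integrable.of_bound (by fun_prop) (b ^ 2) (ae_of_all _ fun ω => ?_)
    rw [norm_eq_abs, abs_pow]
    exact pow_le_pow_left₀ (abs_nonneg _) (hb ω) 2
  calc mgf X μ t = ∫ ω, exp (t * X ω) ∂μ := rfl
    _ ≤ ∫ ω, (1 + t * X ω + 3 / 4 * t ^ 2 * X ω ^ 2) ∂μ := by
        refine integral_mono (integrable_exp_mul_of_abs_le hX hb t)
          (((integrable_const 1).add (hX_int.const_mul t)).add (hX2_int.const_mul _)) fun ω => ?_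
        have hx : |t * X ω| ≤ 1 := by
          rw [abs_mul, abs_of_nonneg ht]
          exact (mul_le_mul_of_nonneg_left (hb ω) ht).trans htb
        simpa [mul_pow, mul_assoc] using exp_le_quadratic_of_abs_le_one hx
    _ = 1 + 3 / 4 * t ^ 2 * ∫ ω, X ω ^ 2 ∂μ := by
        have h1 : Integrable (fun ω => 1 + t * X ω) μ :=
          (integrable_const 1).add (hX_int.const_mul t)
        rw [integral_add h1 (hX2_int.const_mul _),
          integral_add (integrable_const 1) (hX_int.const_mul t), integral_const_mul,
          integral_const_mul, hmean]
        simp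
    _ ≤ exp (3 / 4 * t ^ 2 * ∫ ω, X ω ^ 2 ∂μ) := by
        linarith [add_one_le_exp (3 / 4 * t ^ 2 * ∫ ω, X ω ^ 2 ∂μ)]

variable {Z : ι → Ω → ℝ} {b σ L : ℝ}

theorem bernstein_measureReal_sum_ge_le (hZ : ∀ i, Measurable (Z i)) (hind : iIndepFun Z μ)
    (hb : 0 < b) (hσ : 0 ≤ σ) (hL : 0 ≤ L) (hZb : ∀ i ω, |Z i ω| ≤ b)
    (hmean : ∀ i, μ[Z i] = 0) (hvar : ∀ i, ∫ ω, Z i ω ^ 2 ∂μ ≤ σ ^ 2) (s : Finset ι) :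
    μ.real {ω | σ * √(3 * #s * L) + 2 * b * L ≤ ∑ i ∈ s, Z i ω} ≤ exp (-L) := by
  set u := σ * √(3 * #s * L) + 2 * b * L
  have hu : √(3 * (#s * σ ^ 2) * L) + 2 * b * L ≤ u := by
    rw [show 3 * (#s * σ ^ 2) * L = σ ^ 2 * (3 * #s * L) by ring, sqrt_mul (sq_nonneg σ),
      sqrt_sq hσ]
  obtain ⟨t, ht, htb, hexp⟩ := exists_chernoff_exponent_le hb hL hu
  have hmgf : ∀ i, mgf (Z i) μ t ≤ exp (3 / 4 * t ^ 2 * σ ^ 2) := fun i =>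
    (mgf_le_exp_of_abs_le (hZ i) (hZb i) (hmean i) ht htb).trans (by gcongr; exact hvar i)
  calc μ.real {ω | u ≤ ∑ i ∈ s, Z i ω} = μ.real {ω | u ≤ (∑ i ∈ s, Z i) ω} := by
        simp only [Finset.sum_apply]
    _ ≤ exp (-t * u) * mgf (∑ i ∈ s, Z i) μ t :=
        measure_ge_le_exp_mul_mgf u ht
          (hind.integrable_exp_mul_sum hZ fun i _ => integrable_exp_mul_of_abs_le (hZ i) (hZb i) t)
    _ = exp (-t * u) * ∏ i ∈ s, mgf (Z i) μ t := by rw [hind.mgf_sum hZ]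
    _ ≤ exp (-t * u) * ∏ _i ∈ s, exp (3 / 4 * t ^ 2 * σ ^ 2) := by
        gcongr with i
        · exact fun i _ => mgf_nonneg
        · exact hmgf i
    _ = exp (-t * u + 3 / 4 * t ^ 2 * (#s * σ ^ 2)) := by
        rw [prod_const, ← exp_nat_mul, ← exp_add]
        ring_nf
    _ ≤ exp (-L) := exp_le_exp.2 hexp

theorem bernstein_measureReal_abs_sum_gt_le (hZ : ∀ i, Measurable (Z i))
    (hind : iIndepFun Z μ) (hb : 0 ≤ b) (hσ : 0 ≤ σ) (hL : 0 ≤ L) (hZb : ∀ i ω, |Z i ω| ≤ b)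
    (hmean : ∀ i, μ[Z i] = 0) (hvar : ∀ i, ∫ ω, Z i ω ^ 2 ∂μ ≤ σ ^ 2) (s : Finset ι) :
    μ.real {ω | σ * √(3 * #s * L) + 2 * b * L < |∑ i ∈ s, Z i ω|} ≤ 2 * exp (-L) := by
  rcases hb.eq_or_lt with rfl | hb
  · have hZ0 : ∀ i ω, Z i ω = 0 := fun i ω => abs_nonpos_iff.1 (hZb i ω)
    have hempty : {ω | σ * √(3 * #s * L) + 2 * 0 * L < |∑ i ∈ s, Z i ω|} = ∅ := by
      ext ω
      simp only [hZ0, sum_const_zero, abs_zero, Set.mem_ofPred_eq, Set.mem_empty_iff_false,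
        iff_false, not_lt]
      positivity
    rw [hempty, measureReal_empty]
    positivity
  have hneg := bernstein_measureReal_sum_ge_le (Z := fun i ω => -Z i ω) (fun i => (hZ i).neg)
    (hind.comp (fun _ x => -x) fun _ => measurable_neg) hb hσ hL (by simpa using hZb)
    (fun i => by simpa [integral_neg] using hmean i) (by simpa using hvar) s
  calc μ.real {ω | σ * √(3 * #s * L) + 2 * b * L < |∑ i ∈ s, Z i ω|}
      ≤ μ.real ({ω | σ * √(3 * #s * L) + 2 * b * L ≤ ∑ i ∈ s, Z i ω} ∪
          {ω | σ * √(3 * #s * L) + 2 * b * L ≤ ∑ i ∈ s, -Z i ω}) := by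
        refine measureReal_mono (fun ω hω => ?_)
        rw [Set.mem_ofPred_eq, lt_abs] at hω
        simp only [Set.mem_union, Set.mem_ofPred_eq, sum_neg_distrib]
        exact hω.imp le_of_lt le_of_lt
    _ ≤ exp (-L) + exp (-L) :=
        (measureReal_union_le _ _).trans
          (add_le_add (bernstein_measureReal_sum_ge_le hZ hind hb hσ hL hZb hmean hvar s) hneg)
    _ = 2 * exp (-L) := by ring

end

namespace VRQ

section SupNorm

variable {S A : Type} [Fintype S] [Fintype A] [Nonempty S] [Nonempty A]

lemma abs_le_supNorm (θ : S → A → ℝ) (s : S) (a : A) : |θ s a| ≤ supNorm θ :=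
  le_sup' (f := fun p : S × A => |θ p.1 p.2|) (mem_univ (s, a))

lemma supNorm_nonneg (θ : S → A → ℝ) : 0 ≤ supNorm θ :=
  (abs_nonneg _).trans (abs_le_supNorm θ (Classical.arbitrary S) (Classical.arbitrary A))

lemma abs_vmax_le_supNorm (θ : S → A → ℝ) (s : S) : |vmax θ s| ≤ supNorm θ := by
  obtain ⟨a, -, ha⟩ := exists_mem_eq_sup' univ_nonempty (θ s)
  rw [vmax, ha]
  exact abs_le_supNorm θ s a

lemma measureReal_lt_supNorm_le_sum {Ω : Type*} [MeasurableSpace Ω] (μ : Measure Ω)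
    (f : Ω → S → A → ℝ) (r : ℝ) :
    μ.real {ω | r < supNorm (f ω)} ≤ ∑ p : S × A, μ.real {ω | r < |f ω p.1 p.2|} := by
  calc μ.real {ω | r < supNorm (f ω)}
      = μ.real (⋃ p ∈ (univ : Finset (S × A)), {ω | r < |f ω p.1 p.2|}) := by
        congr 1
        ext ω
        simp [supNorm, lt_sup'_iff]
    _ ≤ _ := measureReal_biUnion_finset_le _ _

end SupNorm

section Noise

variable {S A : Type} [Fintype S] [Fintype A]

lemma IsSample.integral_comp {Ω : Type} [MeasurableSpace Ω] [MeasurableSpace S]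
    [MeasurableSingletonClass S] {μ : Measure Ω} [IsFiniteMeasure μ] {M : MDP S A}
    {X : Ω → S → A → S} (hX : IsSample μ M X) (g : S → ℝ) (s : S) (a : A) :
    ∫ ω, g (X ω s a) ∂μ = ∑ s', M.P s a s' * g s' := by
  rw [integral_comp_eq_sum_measureReal (hX.1 s a) g]
  refine sum_congr rfl fun s' _ => ?_
  change (μ {ω | X ω s a = s'}).toReal * g s' = _
  rw [hX.2 s a s', ENNReal.toReal_ofReal (M.P_nonneg s a s')]

variable (M : MDP S A) [Nonempty A] (γ : ℝ) (θ : S → A → ℝ)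

/-- `T̂(θ)(s,a) - T(θ)(s,a)` for a sample whose `(s,a)` entry is `s'`. -/
noncomputable def bellmanNoise (s : S) (a : A) (s' : S) : ℝ :=
  γ * (vmax θ s' - ∑ x, M.P s a x * vmax θ x)

lemma mcBellman_sub_bellman {N : ℕ} (hN : N ≠ 0) (Y : ℕ → S → A → S) (s : S) (a : A) :
    mcBellman M γ N Y θ s a - bellman M γ θ s a =
      (N : ℝ)⁻¹ * ∑ i ∈ range N, bellmanNoise M γ θ s a (Y i s a) := by
  simp only [mcBellman, empBellman, bellman, bellmanNoise, mul_sub, sum_sub_distrib,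
    sum_add_distrib, sum_const, card_range, nsmul_eq_mul]
  field_simp
  ring

lemma abs_bellmanNoise_le [Nonempty S] {γ : ℝ} (hγ : 0 ≤ γ) (s : S) (a : A) (s' : S) :
    |bellmanNoise M γ θ s a s'| ≤ 2 * γ * supNorm θ := by
  have hmean : |∑ x, M.P s a x * vmax θ x| ≤ supNorm θ :=
    abs_sum_mul_le (M.P_nonneg s a) (M.P_sum_one s a) (abs_vmax_le_supNorm θ)
  rw [bellmanNoise, abs_mul, abs_of_nonneg hγ, mul_comm 2 γ, mul_assoc]
  gcongr
  linarith [abs_sub (vmax θ s') (∑ x, M.P s a x * vmax θ x), abs_vmax_le_supNorm θ s']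

variable {M} {Ω : Type} [MeasurableSpace Ω] [MeasurableSpace S] [MeasurableSingletonClass S]
  {μ : Measure Ω} [IsFiniteMeasure μ] {X : Ω → S → A → S}

lemma IsSample.integral_bellmanNoise (hX : IsSample μ M X) (s : S) (a : A) :
    ∫ ω, bellmanNoise M γ θ s a (X ω s a) ∂μ = 0 := by
  rw [hX.integral_comp (bellmanNoise M γ θ s a)]
  simp only [bellmanNoise, mul_sub, mul_left_comm (M.P s a _) γ, sum_sub_distrib, ← mul_sum,
    ← sum_mul, M.P_sum_one, one_mul, sub_self]

lemma IsSample.integral_bellmanNoise_sq (hX : IsSample μ M X) (s : S) (a : A) :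
    ∫ ω, bellmanNoise M γ θ s a (X ω s a) ^ 2 ∂μ = bellStd M γ θ s a ^ 2 := by
  have hvar := sum_mul_sub_sq_eq (M.P s a) (vmax θ) (M.P_sum_one s a)
  have hnoise : ∑ s', M.P s a s' * bellmanNoise M γ θ s a s' ^ 2 =
      γ ^ 2 * ∑ s', M.P s a s' * (vmax θ s' - ∑ x, M.P s a x * vmax θ x) ^ 2 := by
    rw [mul_sum]
    exact sum_congr rfl fun s' _ => by rw [bellmanNoise]; ring
  have hnonneg : 0 ≤ ∑ s', M.P s a s' * bellmanNoise M γ θ s a s' ^ 2 :=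
    sum_nonneg fun s' _ => mul_nonneg (M.P_nonneg s a s') (sq_nonneg _)
  rw [hX.integral_comp (fun s' => bellmanNoise M γ θ s a s' ^ 2), bellStd, ← hvar, ← hnoise,
    sq_sqrt hnonneg]

end Noise

theorem measureReal_supNorm_mcBellman_sub_bellman_gt_le {S A : Type} [Fintype S] [Fintype A]
    [Nonempty S] [Nonempty A] [MeasurableSpace S] [MeasurableSingletonClass S] (M : MDP S A)
    {γ : ℝ} (hγ0 : 0 ≤ γ) (hγ1 : γ ≤ 1) (θ : S → A → ℝ) {Ω : Type} [MeasurableSpace Ω]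
    {μ : Measure Ω} [IsProbabilityMeasure μ] {Y : ℕ → Ω → S → A → S}
    (hY : ∀ i, IsSample μ M (Y i))
    (hind : iIndepFun (fun p : ℕ × S × A => fun ω => Y p.1 ω p.2.1 p.2.2) μ)
    {N : ℕ} {L : ℝ} (hL : 0 < L) (hLN : L ≤ (1 - γ) ^ 2 * N) :
    μ.real {ω | 4 * (supNorm (bellStd M γ θ) + (1 - γ) * supNorm θ) * √(L / N) <
        supNorm (fun s a => mcBellman M γ N (fun i => Y i ω) θ s a - bellman M γ θ s a)} ≤
      2 * Fintype.card (S × A) * exp (-L) := by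
  set R := 4 * (supNorm (bellStd M γ θ) + (1 - γ) * supNorm θ) * √(L / N)
  have hN : (0 : ℝ) < N := Nat.cast_pos.2 (Nat.pos_of_ne_zero fun hN0 => by
    rw [hN0, Nat.cast_zero, mul_zero] at hLN
    linarith)
  have hentry : ∀ s a, μ.real {ω | R < |mcBellman M γ N (fun i => Y i ω) θ s a -
      bellman M γ θ s a|} ≤ 2 * exp (-L) := by
    intro s a
    have hZ : ∀ i, Measurable fun ω => bellmanNoise M γ θ s a (Y i ω s a) := fun i =>
      (measurable_of_countable (bellmanNoise M γ θ s a)).comp ((hY i).1 s a)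
    have hZind : iIndepFun (fun i ω => bellmanNoise M γ θ s a (Y i ω s a)) μ :=
      (hind.precomp (g := fun i => (i, s, a)) fun i j hij => congrArg Prod.fst hij).comp
        (fun _ => bellmanNoise M γ θ s a) fun _ => measurable_of_countable _
    refine le_trans (measureReal_mono fun ω hω => ?_)
      (bernstein_measureReal_abs_sum_gt_le hZ hZind
        (mul_nonneg (mul_nonneg zero_le_two hγ0) (supNorm_nonneg θ)) (sqrt_nonneg _) hL.le
        (fun i ω => abs_bellmanNoise_le M θ hγ0 s a _)
        (fun i => (hY i).integral_bellmanNoise γ θ s a)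
        (fun i => ((hY i).integral_bellmanNoise_sq γ θ s a).le) (range N))
    have hthr := bernstein_threshold_le (sqrt_nonneg _)
      ((le_abs_self _).trans (abs_le_supNorm (bellStd M γ θ) s a)) (supNorm_nonneg θ) hγ1 hL.le
      hN hLN
    rw [Set.mem_ofPred_eq, mcBellman_sub_bellman M γ θ (by exact_mod_cast hN.ne') _ s a, abs_mul,
      abs_inv, abs_of_pos hN, lt_inv_mul_iff₀ hN] at hω
    rw [Set.mem_ofPred_eq, card_range]
    exact hthr.trans_lt hω
  calc _ ≤ ∑ p : S × A, μ.real {ω | R < |mcBellman M γ N (fun i => Y i ω) θ p.1 p.2 -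
          bellman M γ θ p.1 p.2|} := measureReal_lt_supNorm_le_sum μ
            (fun ω s a => mcBellman M γ N (fun i => Y i ω) θ s a - bellman M γ θ s a) R
    _ ≤ ∑ _p : S × A, 2 * exp (-L) := sum_le_sum fun p _ => hentry p.1 p.2
    _ = 2 * Fintype.card (S × A) * exp (-L) := by
        rw [sum_const, card_univ, nsmul_eq_mul]
        ring

/-- Lemma 1(b): high-probability bound on the recentering noise `V†`. -/
theorem stmt9 :
    ∃ c : ℝ, 0 < c ∧
      ∀ (S A : Type) [Fintype S] [Fintype A] [Nonempty S] [Nonempty A]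
        [MeasurableSpace S] [MeasurableSingletonClass S]
        (M : MDP S A) (γ : ℝ), 0 < γ → γ < 1 →
        ∀ θstar : S → A → ℝ, bellman M γ θstar = θstar →
        ∀ δ : ℝ, 0 < δ → δ < 1 → ∀ Mep : ℕ, 1 ≤ Mep →
        ∀ (Ω : Type) [MeasurableSpace Ω] (μ : Measure Ω) [IsProbabilityMeasure μ]
          (N : ℕ),
          Real.log ((8 : ℝ) * Mep * (Fintype.card S * Fintype.card A) / δ) /
              (1 - γ) ^ 2 ≤ (N : ℝ) →
        ∀ Y : ℕ → Ω → S → A → S,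
          (∀ i, IsSample μ M (Y i)) →
          iIndepFun
            (fun p : ℕ × S × A => fun ω => Y p.1 ω p.2.1 p.2.2) μ →
        ENNReal.ofReal (1 - δ / (3 * Mep)) ≤
          μ {ω | supNorm (fun s a =>
              mcBellman M γ N (fun i => Y i ω) θstar s a - bellman M γ θstar s a) ≤
            c * (supNorm (bellStd M γ θstar) + (1 - γ) * supNorm θstar) *
              Real.sqrt (Real.log ((8 : ℝ) * Mep *
                (Fintype.card S * Fintype.card A) / δ) / N)} := by
  refine ⟨4, four_pos, ?_⟩
  intro S A _ _ _ _ _ _ M γ hγ0 hγ1 θstar _ δ hδ0 hδ1 Mep hMep Ω _ μ _ N hN Y hY hind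
  set D : ℝ := 8 * Mep * (Fintype.card S * Fintype.card A)
  have hD : 8 ≤ D := by
    have : (1 : ℝ) ≤ Mep * (Fintype.card S * Fintype.card A) := by
      exact_mod_cast Nat.mul_pos hMep (Nat.mul_pos Fintype.card_pos Fintype.card_pos)
    linarith
  have hL : 0 < log (D / δ) := log_pos ((one_lt_div hδ0).2 (by linarith))
  have htail := measureReal_supNorm_mcBellman_sub_bellman_gt_le M hγ0.le hγ1.le θstar hY hind hL
    (by rwa [div_le_iff₀ (pow_pos (sub_pos.2 hγ1) 2), mul_comm] at hN)
  refine (ENNReal.ofReal_le_ofReal ?_).trans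
    (ofReal_one_sub_le_measure (ε := 2 * Fintype.card (S × A) * exp (-log (D / δ))) ?_)
  · have hM : (0 : ℝ) < Mep := by exact_mod_cast hMep
    rw [exp_neg, exp_log (by positivity), inv_div, Fintype.card_prod, Nat.cast_mul]
    have : 2 * (Fintype.card S * Fintype.card A : ℝ) * (δ / D) = δ / (4 * Mep) := by
      field_simp
      ring
    rw [this]
    gcongr
    norm_num
  · simpa only [Set.compl_ofPred, not_le] using htail

end VRQ
end

section
/- Fix a realization of the empirical Bellman operators T̂₁, T̂₂, … and of the recentering operator T̃_N, a recentering point θ̄ and B > 0 with ‖θ₁ − θ*‖_∞ ≤ B where θ₁ = θ̄. Define the iterates θ_{k+1} = (1−λ_k)·θ_k + λ_k·{T̂_k(θ_k) − T̂_k(θ̄) + T̃_N(θ̄)} with λ_k = 1/(1+(1−γ)k), the noise matrices V° = (T̃_N(θ̄) − T̃_N(θ*)) − (T(θ̄) − T(θ*)), V† = T̃_N(θ*) − T(θ*), V'_t = (T(θ̄) − T(θ*)) − (T̂_t(θ̄) − T̂_t(θ*)), and the process path'₁ = 0, path'_{t+1} = (1−λ_t)·path'_t + λ_t·V'_t. Then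 for every K ≥ 1: ‖θ_{K+1} − θ*‖_∞ ≤ 2B/(1+(1−γ)K) + 3·(‖V°‖_∞ + ‖V†‖_∞)/(1−γ) + (2·Σ_{ℓ=1}^{K} ‖path'_ℓ‖_∞)/(1+(1−γ)K) + ‖path'_{K+1}‖_∞. -/
/-!
Let `err_t = θ_t - θ* - path'_t`. Subtracting the noise process removes `V'_t` from the update:
`err_{t+1} = (1 - λ_t) err_t + λ_t (T̂_t(θ_t) - T̂_t(θ*) + T̃_N(θ̄) - T(θ̄))`, where
`‖T̂_t(θ_t) - T̂_t(θ*)‖ ≤ γ (‖err_t‖ + ‖path'_t‖)` and `T̃_N(θ̄) - T(θ̄) = V° + V†`.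
Multiplying by `1/λ_t` makes the weights telescope, since `1/λ_t - 1 + γ = 1/λ_{t-1}`:
`(1 + (1-γ)K) ‖err_{K+1}‖ ≤ ‖θ̄ - θ*‖ + γ Σ_{ℓ ≤ K} ‖path'_ℓ‖ + K ‖V° + V†‖`,
and `K / (1 + (1-γ)K) ≤ 1/(1-γ)`.
-/

open MeasureTheory ProbabilityTheory Finset

namespace VRQ

variable {S A : Type} [Fintype S] [Fintype A] [Nonempty S] [Nonempty A]

lemma supNorm_eq_norm (θ : S → A → ℝ) : supNorm θ = ‖θ‖ := by
  have hnonneg : 0 ≤ supNorm θ :=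
    (abs_nonneg _).trans (Finset.le_sup' (fun p : S × A => |θ p.1 p.2|)
      (mem_univ (Classical.arbitrary (S × A))))
  refine le_antisymm (Finset.sup'_le _ _ fun p _ => ?_) ?_
  · rw [← Real.norm_eq_abs]
    exact (norm_le_pi_norm (θ p.1) p.2).trans (norm_le_pi_norm θ p.1)
  · refine (pi_norm_le_iff_of_nonneg hnonneg).2 fun s =>
      (pi_norm_le_iff_of_nonneg hnonneg).2 fun a => ?_
    rw [Real.norm_eq_abs]
    exact Finset.le_sup' (fun p : S × A => |θ p.1 p.2|) (mem_univ (s, a))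

omit [Nonempty S] in
lemma vmax_le_vmax_add_norm_sub (θ₁ θ₂ : S → A → ℝ) (s : S) :
    vmax θ₁ s ≤ vmax θ₂ s + ‖θ₁ - θ₂‖ :=
  Finset.sup'_le _ _ fun a _ => by
    have hle : θ₂ s a ≤ vmax θ₂ s := Finset.le_sup' (θ₂ s) (mem_univ a)
    have hdiff : θ₁ s a - θ₂ s a ≤ ‖θ₁ - θ₂‖ :=
      (le_abs_self _).trans ((norm_le_pi_norm (θ₁ s - θ₂ s) a).trans
        (norm_le_pi_norm (θ₁ - θ₂) s))
    linarith

omit [Nonempty S] in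
lemma abs_vmax_sub_vmax_le (θ₁ θ₂ : S → A → ℝ) (s : S) :
    |vmax θ₁ s - vmax θ₂ s| ≤ ‖θ₁ - θ₂‖ := by
  have h₁ := vmax_le_vmax_add_norm_sub θ₁ θ₂ s
  have h₂ := vmax_le_vmax_add_norm_sub θ₂ θ₁ s
  rw [norm_sub_rev] at h₂
  exact abs_sub_le_iff.2 ⟨by linarith, by linarith⟩

omit [Nonempty S] in
lemma norm_empBellman_sub_le (M : MDP S A) {γ : ℝ} (hγ : 0 ≤ γ) (X : S → A → S)
    (θ₁ θ₂ : S → A → ℝ) :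
    ‖empBellman M γ X θ₁ - empBellman M γ X θ₂‖ ≤ γ * ‖θ₁ - θ₂‖ := by
  refine (pi_norm_le_iff_of_nonneg (by positivity)).2 fun s =>
    (pi_norm_le_iff_of_nonneg (by positivity)).2 fun a => ?_
  have hdiff : empBellman M γ X θ₁ s a - empBellman M γ X θ₂ s a =
      γ * (vmax θ₁ (X s a) - vmax θ₂ (X s a)) := by
    simp only [empBellman]; ring
  simp only [Pi.sub_apply, Real.norm_eq_abs, hdiff, abs_mul, abs_of_nonneg hγ]
  exact mul_le_mul_of_nonneg_left (abs_vmax_sub_vmax_le θ₁ θ₂ _) hγ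

omit [Fintype S] [Fintype A] [Nonempty S] [Nonempty A] in
lemma auxPath_one (γ : ℝ) (W : ℕ → S → A → ℝ) : auxPath γ W 1 = 0 :=
  rfl

omit [Fintype S] [Fintype A] [Nonempty S] [Nonempty A] in
lemma auxPath_succ (γ : ℝ) (W : ℕ → S → A → ℝ) {t : ℕ} (ht : t ≠ 0) :
    auxPath γ W (t + 1) = (1 - stepSize γ t) • auxPath γ W t + stepSize γ t • W t := by
  funext s a
  simp [auxPath, ht]

omit [Nonempty S] in
lemma vrIter_succ (M : MDP S A) (γ : ℝ) (θbar rec : S → A → ℝ) (X : ℕ → S → A → S)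
    (t : ℕ) :
    vrIter M γ θbar rec X (t + 1) =
      (1 - stepSize γ (t + 1)) • vrIter M γ θbar rec X t +
        stepSize γ (t + 1) • (empBellman M γ (X (t + 1)) (vrIter M γ θbar rec X t) -
          empBellman M γ (X (t + 1)) θbar + rec) :=
  rfl

omit [Nonempty S] in
lemma vrIter_sub_auxPath_succ (M : MDP S A) (γ : ℝ) {θstar : S → A → ℝ}
    (hfix : bellman M γ θstar = θstar) (θbar rec : S → A → ℝ) (X : ℕ → S → A → S)
    {Vp : ℕ → S → A → ℝ}
    (hVp : ∀ t, Vp t = (bellman M γ θbar - bellman M γ θstar) -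
      (empBellman M γ (X t) θbar - empBellman M γ (X t) θstar)) (t : ℕ) :
    vrIter M γ θbar rec X (t + 1) - θstar - auxPath γ Vp (t + 2) =
      (1 - stepSize γ (t + 1)) • (vrIter M γ θbar rec X t - θstar - auxPath γ Vp (t + 1)) +
        stepSize γ (t + 1) •
          ((empBellman M γ (X (t + 1)) (vrIter M γ θbar rec X t) -
              empBellman M γ (X (t + 1)) θstar) + (rec - bellman M γ θbar)) := by
  rw [vrIter_succ, auxPath_succ γ Vp t.succ_ne_zero, hVp, hfix]
  funext s a
  simp only [Pi.add_apply, Pi.sub_apply, Pi.smul_apply, smul_eq_mul]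
  ring

section Recursion

variable {E : Type*} [SeminormedAddCommGroup E] [NormedSpace ℝ E]

lemma mul_norm_le_of_stepSize_update {γ : ℝ} (hγ1 : γ ≤ 1) (k : ℕ)
    {e e' g w : E} {p : ℝ}
    (he' : e' = (1 - stepSize γ (k + 1)) • e + stepSize γ (k + 1) • (g + w))
    (hg : ‖g‖ ≤ γ * (‖e‖ + p)) :
    (1 + (1 - γ) * ((k + 1 : ℕ) : ℝ)) * ‖e'‖ ≤
      (1 + (1 - γ) * k) * ‖e‖ + (γ * p + ‖w‖) := by
  set c : ℝ := 1 + (1 - γ) * ((k + 1 : ℕ) : ℝ) with hc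
  have hk : (0 : ℝ) ≤ k := k.cast_nonneg
  have hc1 : 1 ≤ c := by push_cast [hc]; nlinarith
  have hscaled : c • e' = (c - 1) • e + (g + w) := by
    have hc0 : c ≠ 0 := by linarith
    rw [he', smul_add, smul_smul, smul_smul, stepSize, ← hc, mul_one_div_cancel hc0, one_smul,
      mul_sub, mul_one, mul_one_div_cancel hc0]
  calc c * ‖e'‖ = ‖c • e'‖ := by rw [norm_smul, Real.norm_of_nonneg (by linarith)]
    _ ≤ (c - 1) * ‖e‖ + (‖g‖ + ‖w‖) := by
      rw [hscaled]
      refine (norm_add_le _ _).trans (add_le_add ?_ (norm_add_le _ _))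
      rw [norm_smul, Real.norm_of_nonneg (by linarith)]
    _ ≤ (1 + (1 - γ) * k) * ‖e‖ + (γ * p + ‖w‖) := by
      have hck : c - 1 + γ = 1 + (1 - γ) * k := by push_cast [hc]; ring
      rw [← hck]
      linarith [mul_add γ ‖e‖ p]

end Recursion

lemma le_add_sum_Icc_of_succ_le {f b : ℕ → ℝ} (h : ∀ t, f (t + 1) ≤ f t + b (t + 1)) (K : ℕ) :
    f K ≤ f 0 + ∑ ℓ ∈ Icc 1 K, b ℓ := by
  induction K with
  | zero => simp
  | succ K ih =>
    rw [Finset.sum_Icc_succ_top (by omega)]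
    linarith [h K]

omit [Nonempty S] in
lemma mul_norm_vrIter_sub_sub_auxPath_le (M : MDP S A) {γ : ℝ} (hγ0 : 0 ≤ γ) (hγ1 : γ ≤ 1)
    {θstar : S → A → ℝ} (hfix : bellman M γ θstar = θstar) (θbar rec : S → A → ℝ)
    (X : ℕ → S → A → S) {Vp : ℕ → S → A → ℝ}
    (hVp : ∀ t, Vp t = (bellman M γ θbar - bellman M γ θstar) -
      (empBellman M γ (X t) θbar - empBellman M γ (X t) θstar)) (K : ℕ) :
    (1 + (1 - γ) * K) * ‖vrIter M γ θbar rec X K - θstar - auxPath γ Vp (K + 1)‖ ≤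
      ‖θbar - θstar‖ + (γ * ∑ ℓ ∈ Icc 1 K, ‖auxPath γ Vp ℓ‖ +
        K * ‖rec - bellman M γ θbar‖) := by
  set θ := vrIter M γ θbar rec X
  set path := auxPath γ Vp
  set err : ℕ → S → A → ℝ := fun t => θ t - θstar - path (t + 1)
  have hstep (t : ℕ) : (1 + (1 - γ) * ((t + 1 : ℕ) : ℝ)) * ‖err (t + 1)‖ ≤
      (1 + (1 - γ) * t) * ‖err t‖ + (γ * ‖path (t + 1)‖ + ‖rec - bellman M γ θbar‖) := by
    refine mul_norm_le_of_stepSize_update hγ1 t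
      (vrIter_sub_auxPath_succ M γ hfix θbar rec X hVp t) ?_
    calc _ ≤ γ * ‖θ t - θstar‖ := norm_empBellman_sub_le M hγ0 _ _ _
      _ ≤ γ * (‖err t‖ + ‖path (t + 1)‖) := by
        gcongr
        exact (congrArg norm (by simp only [err]; abel : θ t - θstar = err t + path (t + 1))).trans_le
          (norm_add_le _ _)
  have herr0 : err 0 = θbar - θstar := by simp [err, θ, path, vrIter, auxPath_one]
  have htel := le_add_sum_Icc_of_succ_le (f := fun t => (1 + (1 - γ) * t) * ‖err t‖)
    (b := fun ℓ => γ * ‖path ℓ‖ + ‖rec - bellman M γ θbar‖) hstep K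
  simpa only [herr0, sum_add_distrib, ← mul_sum, sum_const, Nat.card_Icc, Nat.cast_zero,
    mul_zero, add_zero, one_mul, nsmul_eq_mul, Nat.add_sub_cancel] using htel

/-- Deterministic decomposition bound on one epoch in terms of the noise matrices
`V°`, `V†` and the auxiliary process `{path'_t}`. -/
theorem stmt13 :
    ∀ (S A : Type) [Fintype S] [Fintype A] [Nonempty S] [Nonempty A]
      (M : MDP S A) (γ : ℝ), 0 < γ → γ < 1 →
      ∀ θstar : S → A → ℝ, bellman M γ θstar = θstar →
      ∀ (X : ℕ → S → A → S) (N : ℕ) (Y : ℕ → S → A → S) (θbar : S → A → ℝ) (B : ℝ),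
        supNorm (fun s a => θbar s a - θstar s a) ≤ B →
      ∀ Vp : ℕ → S → A → ℝ,
        (∀ t s a, Vp t s a =
          (bellman M γ θbar s a - bellman M γ θstar s a) -
            (empBellman M γ (X t) θbar s a - empBellman M γ (X t) θstar s a)) →
      ∀ K : ℕ, 1 ≤ K →
        supNorm (fun s a =>
            vrIter M γ θbar (mcBellman M γ N Y θbar) X K s a - θstar s a) ≤
          2 * B / (1 + (1 - γ) * K) +
            3 * (supNorm (fun s a =>
                  (mcBellman M γ N Y θbar s a - mcBellman M γ N Y θstar s a) -
                    (bellman M γ θbar s a - bellman M γ θstar s a)) +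
                supNorm (fun s a =>
                  mcBellman M γ N Y θstar s a - bellman M γ θstar s a)) / (1 - γ) +
            2 * (∑ ℓ ∈ Finset.Icc 1 K, supNorm (auxPath γ Vp ℓ)) /
              (1 + (1 - γ) * K) +
            supNorm (auxPath γ Vp (K + 1)) := by
  intro S A _ _ _ _ M γ hγ0 hγ1 θstar hfix X N Y θbar B hB Vp hVp K _
  set Tmc := mcBellman M γ N Y
  set θ := vrIter M γ θbar (Tmc θbar) X
  set path := auxPath γ Vp
  set w := Tmc θbar - bellman M γ θbar
  set v := ‖Tmc θbar - Tmc θstar - (bellman M γ θbar - bellman M γ θstar)‖ +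
    ‖Tmc θstar - bellman M γ θstar‖
  set pathSum := ∑ ℓ ∈ Icc 1 K, ‖path ℓ‖
  set c : ℝ := 1 + (1 - γ) * K
  simp only [supNorm_eq_norm] at hB ⊢
  change ‖θbar - θstar‖ ≤ B at hB
  change ‖θ K - θstar‖ ≤ 2 * B / c + 3 * v / (1 - γ) + 2 * pathSum / c + ‖path (K + 1)‖
  have hw : ‖w‖ ≤ v := (congrArg norm (by simp only [w]; abel : w = _)).trans_le (norm_add_le _ _)
  have hErr := mul_norm_vrIter_sub_sub_auxPath_le M hγ0.le hγ1.le hfix θbar (Tmc θbar) X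
    (fun t => funext₂ (hVp t)) K
  have hγ : 0 < 1 - γ := by linarith
  have hc : 0 < c := by positivity
  have hB0 : 0 ≤ B := (norm_nonneg _).trans hB
  have hpathSum : 0 ≤ pathSum := sum_nonneg fun ℓ _ => norm_nonneg _
  have hKw : K * ‖w‖ / c ≤ 3 * v / (1 - γ) := by
    rw [div_le_div_iff₀ hc hγ]
    nlinarith [norm_nonneg w, (K.cast_nonneg : (0 : ℝ) ≤ K)]
  have hBpath : (B + γ * pathSum) / c ≤ 2 * B / c + 2 * pathSum / c := by
    rw [← add_div]
    gcongr <;> linarith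
  calc ‖θ K - θstar‖ ≤ ‖θ K - θstar - path (K + 1)‖ + ‖path (K + 1)‖ := norm_le_norm_sub_add _ _
    _ ≤ (B + γ * pathSum) / c + K * ‖w‖ / c + ‖path (K + 1)‖ := by
        rw [← add_div]
        gcongr
        rw [le_div_iff₀ hc, mul_comm]
        linarith
    _ ≤ _ := by linarith

end VRQ
end

section
/- Let θ* be the optimal Q-function for the reward r, let θ̂ be the optimal Q-function for a perturbed reward r̃ : S×A → ℝ, and let π̂ be a greedy policy for θ̂, i.e. π̂(s) ∈ argmax_a θ̂(s,a). Then the elementwise positive part satisfies max{θ̂(s,a) − θ*(s,a), 0} ≤ ((I − γP^{π̂})^{−1}|r̃ − r|)(s,a) for every state-action pair (s,a), where |r̃ − r| denotes the function (s,a) ↦ |r̃(s,a) − r(s,a)|. -/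
open MeasureTheory ProbabilityTheory Finset

/-!
With `u = θ̂ - θ*`, subtracting the two Bellman equations and using that `π̂` is greedy for `θ̂`
gives `u ≤ |r̃ - r| + γ P^π̂ u`. Because `P^π̂` is stochastic and `γ < 1`, a minimum principle
shows that every such `u` lies below `(I - γ P^π̂)⁻¹ |r̃ - r|`; applied to `u = 0` the same
principle shows that this bound is nonnegative.
-/

namespace VRQ

variable {S A : Type}

lemma vmax_sub_vmax_le_of_greedy [Fintype A] [Nonempty A] {θ θ' : S → A → ℝ} {π : S → A}
    (hπ : ∀ s, θ s (π s) = vmax θ s) (s : S) :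
    vmax θ s - vmax θ' s ≤ θ s (π s) - θ' s (π s) := by
  have : θ' s (π s) ≤ vmax θ' s := Finset.le_sup' (θ' s) (Finset.mem_univ (π s))
  linarith [hπ s]

variable [Fintype S] [Fintype A]

section PolicyOperator

variable (M : MDP S A) (π : S → A)

lemma polOp_mono {u v : S → A → ℝ} (h : u ≤ v) : polOp M π u ≤ polOp M π v :=
  fun s a => Finset.sum_le_sum fun s' _ => mul_le_mul_of_nonneg_left (h _ _) (M.P_nonneg s a s')

lemma polOp_const (c : ℝ) : polOp M π (fun _ _ => c) = fun _ _ => c := by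
  ext s a
  simp only [polOp, ← Finset.sum_mul, M.P_sum_one, one_mul]

lemma polOp_sub (u v : S → A → ℝ) : polOp M π (u - v) = polOp M π u - polOp M π v := by
  ext s a
  simp only [polOp, Pi.sub_apply, mul_sub, Finset.sum_sub_distrib]

lemma abs_polOp_le {u : S → A → ℝ} {C : ℝ} (h : ∀ s a, |u s a| ≤ C) (s : S) (a : A) :
    |polOp M π u s a| ≤ C :=
  calc |polOp M π u s a| ≤ ∑ s', M.P s a s' * |u s' (π s')| := by
        refine (Finset.abs_sum_le_sum_abs _ _).trans_eq (Finset.sum_congr rfl fun s' _ => ?_)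
        rw [abs_mul, abs_of_nonneg (M.P_nonneg s a s')]
    _ ≤ C :=
        (polOp_mono M π (u := fun s a => |u s a|) (v := fun _ _ => C) h s a).trans_eq
          (congrFun (congrFun (polOp_const M π C) s) a)

lemma abs_polOp_iterate_le (u : S → A → ℝ) (k : ℕ) (s : S) (a : A) :
    |(polOp M π)^[k] u s a| ≤ ‖u‖ := by
  induction k generalizing s a with
  | zero => exact (norm_le_pi_norm (u s) a).trans (norm_le_pi_norm u s)
  | succ k ih => rw [Function.iterate_succ_apply']; exact abs_polOp_le M π ih s a

/-- At a minimiser of `v` the average `P^π v` is at least the minimum `m`, so `γ m ≤ m`. -/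
lemma nonneg_of_smul_polOp_le {γ : ℝ} (hγ₀ : 0 ≤ γ) (hγ₁ : γ < 1) {v : S → A → ℝ}
    (hv : γ • polOp M π v ≤ v) : 0 ≤ v := by
  intro s a
  obtain ⟨p, -, hp⟩ := Finset.exists_min_image Finset.univ (fun q : S × A => v q.1 q.2)
    ⟨(s, a), Finset.mem_univ _⟩
  have hmin : (fun _ _ => v p.1 p.2) ≤ v := fun s' a' => hp (s', a') (Finset.mem_univ _)
  have hPv : v p.1 p.2 ≤ polOp M π v p.1 p.2 := by
    simpa [polOp_const] using polOp_mono M π hmin p.1 p.2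
  have hγv : γ * v p.1 p.2 ≤ v p.1 p.2 := (mul_le_mul_of_nonneg_left hPv hγ₀).trans (hv p.1 p.2)
  have : 0 ≤ v p.1 p.2 := by nlinarith
  exact this.trans (hp (s, a) (Finset.mem_univ _))

end PolicyOperator

section Resolvent

variable (M : MDP S A) (π : S → A) {γ : ℝ}

lemma summable_resolvent (hγ₀ : 0 ≤ γ) (hγ₁ : γ < 1) (u : S → A → ℝ) (s : S) (a : A) :
    Summable fun k : ℕ => γ ^ k * (polOp M π)^[k] u s a := by
  refine Summable.of_norm_bounded ((summable_geometric_of_lt_one hγ₀ hγ₁).mul_right ‖u‖)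
    fun k => ?_
  rw [Real.norm_eq_abs, abs_mul, abs_of_nonneg (pow_nonneg hγ₀ k)]
  exact mul_le_mul_of_nonneg_left (abs_polOp_iterate_le M π u k s a) (pow_nonneg hγ₀ k)

/-- Split off the `k = 0` term of the series and pull one factor `γ P^π` out of the rest. -/
lemma resolvent_eq_add_smul_polOp (hγ₀ : 0 ≤ γ) (hγ₁ : γ < 1) (u : S → A → ℝ) :
    resolvent M γ π u = u + γ • polOp M π (resolvent M γ π u) := by
  ext s a
  have hsum := summable_resolvent M π hγ₀ hγ₁ u
  have hshift : ∀ k : ℕ, γ ^ (k + 1) * (polOp M π)^[k + 1] u s a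
      = ∑ s', γ * (M.P s a s' * (γ ^ k * (polOp M π)^[k] u s' (π s'))) := by
    intro k
    rw [Function.iterate_succ_apply', polOp, Finset.mul_sum]
    exact Finset.sum_congr rfl fun s' _ => by ring
  rw [resolvent, (hsum s a).tsum_eq_zero_add]
  simp only [pow_zero, one_mul, Function.iterate_zero, id_eq, hshift, Pi.add_apply,
    Pi.smul_apply, smul_eq_mul, polOp, resolvent, Finset.mul_sum]
  rw [Summable.tsum_finsetSum fun s' _ => ((hsum s' (π s')).mul_left _).mul_left _]
  simp only [tsum_mul_left]

/-- Apply `nonneg_of_smul_polOp_le` to `resolvent M γ π e - u`. -/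
lemma le_resolvent_of_le_add_smul_polOp (hγ₀ : 0 ≤ γ) (hγ₁ : γ < 1) {u e : S → A → ℝ}
    (h : u ≤ e + γ • polOp M π u) : u ≤ resolvent M γ π e := by
  have hR := resolvent_eq_add_smul_polOp M π hγ₀ hγ₁ e
  have hsuper : γ • polOp M π (resolvent M γ π e - u) ≤ resolvent M γ π e - u := by
    intro s a
    have hu := h s a
    have hRsa := congrFun (congrFun hR s) a
    simp only [polOp_sub, Pi.add_apply, Pi.sub_apply, Pi.smul_apply, smul_eq_mul] at hu hRsa ⊢
    linarith
  exact sub_nonneg.mp (nonneg_of_smul_polOp_le M π hγ₀ hγ₁ hsuper)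

lemma resolvent_nonneg (hγ₀ : 0 ≤ γ) (hγ₁ : γ < 1) {e : S → A → ℝ} (he : 0 ≤ e) :
    0 ≤ resolvent M γ π e :=
  le_resolvent_of_le_add_smul_polOp M π hγ₀ hγ₁ <| by
    rw [show polOp M π 0 = 0 from polOp_const M π 0, smul_zero, add_zero]
    exact he

end Resolvent

lemma bellman_with_r_sub_bellman_le [Nonempty A] (M : MDP S A) (r' : S → A → ℝ) {γ : ℝ}
    (hγ : 0 ≤ γ) {θ θ' : S → A → ℝ} {π : S → A} (hπ : ∀ s, θ s (π s) = vmax θ s) :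
    bellman { M with r := r' } γ θ - bellman M γ θ' ≤ (r' - M.r) + γ • polOp M π (θ - θ') := by
  intro s a
  have hP : ∑ s', M.P s a s' * vmax θ s' - ∑ s', M.P s a s' * vmax θ' s'
      ≤ polOp M π (θ - θ') s a := by
    rw [← Finset.sum_sub_distrib]
    exact Finset.sum_le_sum fun s' _ => by
      rw [← mul_sub]
      exact mul_le_mul_of_nonneg_left (vmax_sub_vmax_le_of_greedy hπ s') (M.P_nonneg s a s')
  have := mul_le_mul_of_nonneg_left hP hγ
  simp only [bellman, Pi.sub_apply, Pi.add_apply, Pi.smul_apply, smul_eq_mul] at this ⊢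
  linarith

/-- Elementwise bound on the positive part `(θ̂ - θ*)₊` under a reward perturbation. -/
theorem stmt19 :
    ∀ (S A : Type) [Fintype S] [Fintype A] [Nonempty S] [Nonempty A]
      (M : MDP S A) (γ : ℝ), 0 < γ → γ < 1 →
      ∀ θstar : S → A → ℝ, bellman M γ θstar = θstar →
      ∀ (rt : S → A → ℝ) (θhat : S → A → ℝ),
        bellman { M with r := rt } γ θhat = θhat →
      ∀ πhat : S → A, (∀ s, θhat s (πhat s) = vmax θhat s) →
      ∀ s a, max (θhat s a - θstar s a) 0 ≤
        resolvent M γ πhat (fun s' a' => |rt s' a' - M.r s' a'|) s a := by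
  intro S A _ _ _ _ M γ hγ₀ hγ₁ θstar hstar rt θhat hhat πhat hπ s a
  set e : S → A → ℝ := fun s' a' => |rt s' a' - M.r s' a'|
  have hcmp : θhat - θstar ≤ e + γ • polOp M πhat (θhat - θstar) :=
    calc θhat - θstar = bellman { M with r := rt } γ θhat - bellman M γ θstar := by
          rw [hhat, hstar]
      _ ≤ (rt - M.r) + γ • polOp M πhat (θhat - θstar) :=
          bellman_with_r_sub_bellman_le M rt hγ₀.le hπ
      _ ≤ e + γ • polOp M πhat (θhat - θstar) :=
          add_le_add_left (fun s' a' => le_abs_self (rt s' a' - M.r s' a')) _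
  exact max_le (le_resolvent_of_le_add_smul_polOp M πhat hγ₀.le hγ₁ hcmp s a)
    (resolvent_nonneg M πhat hγ₀.le hγ₁ (fun s' a' => abs_nonneg _) s a)

end VRQ
end
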